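/- arXiv:2306.15267 — 2 statements merged into one kernel-verified Lean document; each statement's English description precedes it below -/
import Mathlib

section
/- The direct sum M₁ ⊕ M₂ of two matroids on disjoint ground sets is uniformly dense if and only if M₁ and M₂ are both uniformly dense and have equal densities ρ(M₁) = ρ(M₂) = ρ(M₁ ⊕ M₂). -/
/-!
Ranks add over a direct sum, and a set inside one ground set has rank zero in the other summand.
Hence the density condition for `M₁ ⊕ M₂` splits into the conditions for subsets of `E₁` and of
`E₂`, each measured against `ρ(M₁ ⊕ M₂)`. Applied to `E₁` and `E₂` themselves, these say that the
mediant `ρ(M₁ ⊕ M₂)` of `ρ(M₁)` and `ρ(M₂)` is at least both of them, which forces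
`ρ(M₁) = ρ(M₂)`; once the three densities agree, measuring a subset of `Eᵢ` against `ρ(M₁ ⊕ M₂)`
is the same as measuring it against `ρ(Mᵢ)`.
-/

open Finset

variable {α : Type*} [DecidableEq α]

/-- A collection of bases of a (loopful-permitting) matroid on ground set `E`:
nonempty, contained in `E`, and satisfying the base-exchange axiom. -/
def isBaseFamily (E : Finset α) (Bs : Finset (Finset α)) : Prop :=
  Bs.Nonempty ∧ (∀ B ∈ Bs, B ⊆ E) ∧
    ∀ A ∈ Bs, ∀ B ∈ Bs, ∀ a ∈ A \ B, ∃ b ∈ B \ A, insert b (A.erase a) ∈ Bs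

/-- The rank of a subset `A`: the largest intersection of `A` with a basis. -/
def rk (Bs : Finset (Finset α)) (A : Finset α) : ℕ :=
  Bs.sup fun B => (B ∩ A).card

/-- Every element of the ground set lies in some basis. -/
def loopless (E : Finset α) (Bs : Finset (Finset α)) : Prop :=
  ∀ e ∈ E, ∃ B ∈ Bs, e ∈ B

/-- Uniformly dense: `ρ(A) ≤ ρ(E)` for all nonempty `A ⊆ E`, in cross-multiplied form. -/
def uniformlyDense (E : Finset α) (Bs : Finset (Finset α)) : Prop :=
  ∀ A ⊆ E, A.Nonempty → (A.card : ℝ) * (rk Bs E : ℝ) ≤ (E.card : ℝ) * (rk Bs A : ℝ)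

section Rank

variable {E E₁ E₂ A : Finset α} {Bs Bs₁ Bs₂ : Finset (Finset α)}

lemma rk_pos_of_loopless (hl : loopless E Bs) (hA : A ⊆ E) (hne : A.Nonempty) :
    0 < rk Bs A := by
  obtain ⟨e, he⟩ := hne
  obtain ⟨B, hB, heB⟩ := hl e (hA he)
  exact (card_pos.2 ⟨e, mem_inter.2 ⟨heB, he⟩⟩).trans_le
    (le_sup (f := fun B => (B ∩ A).card) hB)

lemma rk_inter_of_forall_subset (hs : ∀ B ∈ Bs, B ⊆ E) (A : Finset α) :
    rk Bs (A ∩ E) = rk Bs A :=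
  sup_congr rfl fun B hB => by
    rw [inter_comm A, ← inter_assoc, inter_eq_left.2 (hs B hB)]

lemma rk_eq_zero_of_disjoint (hs : ∀ B ∈ Bs, B ⊆ E) (hA : Disjoint A E) : rk Bs A = 0 := by
  rw [← rk_inter_of_forall_subset hs, disjoint_iff_inter_eq_empty.1 hA]
  simp [rk]

lemma rk_image₂_union (hdisj : Disjoint E₁ E₂) (hBs₁ : Bs₁.Nonempty) (hs₁ : ∀ B ∈ Bs₁, B ⊆ E₁)
    (hBs₂ : Bs₂.Nonempty) (hs₂ : ∀ B ∈ Bs₂, B ⊆ E₂) (A : Finset α) :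
    rk (image₂ (· ∪ ·) Bs₁ Bs₂) A = rk Bs₁ A + rk Bs₂ A := by
  have hcard : ∀ B₁ ∈ Bs₁, ∀ B₂ ∈ Bs₂,
      ((B₁ ∪ B₂) ∩ A).card = (B₁ ∩ A).card + (B₂ ∩ A).card := fun B₁ hB₁ B₂ hB₂ => by
    rw [union_inter_distrib_right, card_union_of_disjoint]
    exact hdisj.mono (inter_subset_left.trans (hs₁ B₁ hB₁)) (inter_subset_left.trans (hs₂ B₂ hB₂))
  rw [rk, sup_image₂_left, rk, rk, Finset.sup_add hBs₁]
  refine sup_congr rfl fun B₁ hB₁ => ?_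
  rw [Finset.add_sup hBs₂]
  exact sup_congr rfl fun B₂ hB₂ => hcard B₁ hB₁ B₂ hB₂

lemma rk_image₂_union_union (hdisj : Disjoint E₁ E₂) (hBs₁ : Bs₁.Nonempty)
    (hs₁ : ∀ B ∈ Bs₁, B ⊆ E₁) (hBs₂ : Bs₂.Nonempty) (hs₂ : ∀ B ∈ Bs₂, B ⊆ E₂) :
    rk (image₂ (· ∪ ·) Bs₁ Bs₂) (E₁ ∪ E₂) = rk Bs₁ E₁ + rk Bs₂ E₂ := by
  rw [rk_image₂_union hdisj hBs₁ hs₁ hBs₂ hs₂, ← rk_inter_of_forall_subset hs₁,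
    ← rk_inter_of_forall_subset hs₂ (E₁ ∪ E₂), union_inter_cancel_left, union_inter_cancel_right]

end Rank

lemma mul_le_mul_iff_of_mul_eq {a k n₁ r₁ n r : ℝ} (hn₁ : 0 < n₁) (hn : 0 < n)
    (h : n₁ * r = n * r₁) : a * r ≤ n * k ↔ a * r₁ ≤ n₁ * k := by
  rw [← mul_le_mul_iff_left₀ hn₁, ← mul_le_mul_iff_left₀ (b := a * r₁) hn,
    show a * r * n₁ = a * r₁ * n by linear_combination a * h,
    show n * k * n₁ = n₁ * k * n by ring]

lemma div_eq_div_and_div_eq_add_div_add_iff {n₁ n₂ r₁ r₂ : ℝ} (hr₁ : 0 < r₁) (hr₂ : 0 < r₂) :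
    n₁ / r₁ = n₂ / r₂ ∧ n₂ / r₂ = (n₁ + n₂) / (r₁ + r₂) ↔ n₁ * r₂ = n₂ * r₁ := by
  rw [div_eq_div_iff hr₁.ne' hr₂.ne', div_eq_div_iff hr₂.ne' (by positivity)]
  exact ⟨fun h => h.1, fun h => ⟨h, by linear_combination -h⟩⟩

section Density

variable {E E₁ E₂ : Finset α} {Bs Bs₁ Bs₂ : Finset (Finset α)}

lemma uniformlyDense_iff_forall_subset :
    uniformlyDense E Bs ↔ ∀ A ⊆ E, (A.card : ℝ) * rk Bs E ≤ E.card * rk Bs A := by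
  refine ⟨fun h A hA => ?_, fun h A hA _ => h A hA⟩
  rcases A.eq_empty_or_nonempty with rfl | hne
  · simp only [card_empty, Nat.cast_zero, zero_mul]
    positivity
  · exact h A hA hne

lemma uniformlyDense_iff_of_mul_eq {n r : ℝ} (hE : E.Nonempty) (hn : 0 < n)
    (h : E.card * r = n * rk Bs E) :
    uniformlyDense E Bs ↔ ∀ A ⊆ E, (A.card : ℝ) * r ≤ n * rk Bs A := by
  rw [uniformlyDense_iff_forall_subset]
  exact forall₂_congr fun A _ =>
    (mul_le_mul_iff_of_mul_eq (Nat.cast_pos.2 hE.card_pos) hn h).symm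

lemma forall_card_mul_le_rk_image₂_union_iff (hdisj : Disjoint E₁ E₂) (hBs₁ : Bs₁.Nonempty)
    (hs₁ : ∀ B ∈ Bs₁, B ⊆ E₁) (hBs₂ : Bs₂.Nonempty) (hs₂ : ∀ B ∈ Bs₂, B ⊆ E₂) (r n : ℝ) :
    (∀ A ⊆ E₁ ∪ E₂, (A.card : ℝ) * r ≤ n * rk (image₂ (· ∪ ·) Bs₁ Bs₂) A) ↔
      (∀ A ⊆ E₁, (A.card : ℝ) * r ≤ n * rk Bs₁ A) ∧
        ∀ A ⊆ E₂, (A.card : ℝ) * r ≤ n * rk Bs₂ A := by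
  simp_rw [rk_image₂_union hdisj hBs₁ hs₁ hBs₂ hs₂]
  refine ⟨fun h => ⟨fun A hA => ?_, fun A hA => ?_⟩, fun ⟨h₁, h₂⟩ A hA => ?_⟩
  · simpa [rk_eq_zero_of_disjoint hs₂ (hdisj.mono_left hA)] using
      h A (hA.trans subset_union_left)
  · simpa [rk_eq_zero_of_disjoint hs₁ (hdisj.symm.mono_left hA)] using
      h A (hA.trans subset_union_right)
  · have hcard : A.card = (A ∩ E₁).card + (A ∩ E₂).card := by
      rw [← card_union_of_disjoint (hdisj.mono inter_subset_right inter_subset_right),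
        ← inter_union_distrib_left, inter_eq_left.2 hA]
    have h₁ := h₁ _ (inter_subset_right (s₁ := A))
    have h₂ := h₂ _ (inter_subset_right (s₁ := A))
    rw [rk_inter_of_forall_subset hs₁] at h₁
    rw [rk_inter_of_forall_subset hs₂] at h₂
    rw [hcard]
    push_cast
    linarith

lemma uniformlyDense_image₂_union_iff (hdisj : Disjoint E₁ E₂) (hE₁ : E₁.Nonempty)
    (hE₂ : E₂.Nonempty) (hBs₁ : Bs₁.Nonempty) (hs₁ : ∀ B ∈ Bs₁, B ⊆ E₁) (hBs₂ : Bs₂.Nonempty)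
    (hs₂ : ∀ B ∈ Bs₂, B ⊆ E₂) :
    uniformlyDense (E₁ ∪ E₂) (image₂ (· ∪ ·) Bs₁ Bs₂) ↔
      uniformlyDense E₁ Bs₁ ∧ uniformlyDense E₂ Bs₂ ∧
        (E₁.card : ℝ) * rk Bs₂ E₂ = E₂.card * rk Bs₁ E₁ := by
  rw [uniformlyDense_iff_forall_subset,
    forall_card_mul_le_rk_image₂_union_iff hdisj hBs₁ hs₁ hBs₂ hs₂]
  have hrk : (rk (image₂ (· ∪ ·) Bs₁ Bs₂) (E₁ ∪ E₂) : ℝ) = rk Bs₁ E₁ + rk Bs₂ E₂ := by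
    rw [rk_image₂_union_union hdisj hBs₁ hs₁ hBs₂ hs₂, Nat.cast_add]
  set r : ℝ := (rk (image₂ (· ∪ ·) Bs₁ Bs₂) (E₁ ∪ E₂) : ℝ)
  have hcard : ((E₁ ∪ E₂).card : ℝ) = E₁.card + E₂.card := by
    rw [card_union_of_disjoint hdisj, Nat.cast_add]
  have hn : (0 : ℝ) < (E₁ ∪ E₂).card := Nat.cast_pos.2 (hE₁.mono subset_union_left).card_pos
  have hd₁ (heq : (E₁.card : ℝ) * rk Bs₂ E₂ = E₂.card * rk Bs₁ E₁) :=
    uniformlyDense_iff_of_mul_eq (Bs := Bs₁) (r := r) hE₁ hn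
      (by rw [hcard, hrk]; linear_combination heq)
  have hd₂ (heq : (E₁.card : ℝ) * rk Bs₂ E₂ = E₂.card * rk Bs₁ E₁) :=
    uniformlyDense_iff_of_mul_eq (Bs := Bs₂) (r := r) hE₂ hn
      (by rw [hcard, hrk]; linear_combination -heq)
  constructor
  · rintro ⟨h₁, h₂⟩
    have hle₁ := h₁ E₁ subset_rfl
    have hle₂ := h₂ E₂ subset_rfl
    rw [hcard, hrk] at hle₁ hle₂
    have heq : (E₁.card : ℝ) * rk Bs₂ E₂ = E₂.card * rk Bs₁ E₁ := by linarith
    exact ⟨(hd₁ heq).2 h₁, (hd₂ heq).2 h₂, heq⟩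
  · rintro ⟨hU₁, hU₂, heq⟩
    exact ⟨(hd₁ heq).1 hU₁, (hd₂ heq).1 hU₂⟩

end Density

/-- The direct sum of two matroids on disjoint nonempty ground sets is uniformly dense iff
both summands are uniformly dense with equal densities `ρ(M₁) = ρ(M₂) = ρ(M₁ ⊕ M₂)`. -/
theorem uniformlyDense_directSum_iff (E₁ E₂ : Finset α) (Bs₁ Bs₂ : Finset (Finset α))
    (hdisj : Disjoint E₁ E₂) (hE₁ : E₁.Nonempty) (hE₂ : E₂.Nonempty)
    (hM₁ : isBaseFamily E₁ Bs₁) (hM₂ : isBaseFamily E₂ Bs₂)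
    (hl₁ : loopless E₁ Bs₁) (hl₂ : loopless E₂ Bs₂) :
    uniformlyDense (E₁ ∪ E₂) (Finset.image₂ (· ∪ ·) Bs₁ Bs₂) ↔
      uniformlyDense E₁ Bs₁ ∧ uniformlyDense E₂ Bs₂ ∧
        (E₁.card : ℝ) / (rk Bs₁ E₁ : ℝ) = (E₂.card : ℝ) / (rk Bs₂ E₂ : ℝ) ∧
        (E₂.card : ℝ) / (rk Bs₂ E₂ : ℝ) =
          ((E₁ ∪ E₂).card : ℝ) /
            (rk (Finset.image₂ (· ∪ ·) Bs₁ Bs₂) (E₁ ∪ E₂) : ℝ) := by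
  obtain ⟨hBs₁, hs₁, -⟩ := hM₁
  obtain ⟨hBs₂, hs₂, -⟩ := hM₂
  have hr₁ : (0 : ℝ) < rk Bs₁ E₁ := Nat.cast_pos.2 (rk_pos_of_loopless hl₁ subset_rfl hE₁)
  have hr₂ : (0 : ℝ) < rk Bs₂ E₂ := Nat.cast_pos.2 (rk_pos_of_loopless hl₂ subset_rfl hE₂)
  rw [uniformlyDense_image₂_union_iff hdisj hE₁ hE₂ hBs₁ hs₁ hBs₂ hs₂,
    rk_image₂_union_union hdisj hBs₁ hs₁ hBs₂ hs₂, card_union_of_disjoint hdisj,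
    Nat.cast_add, Nat.cast_add, div_eq_div_and_div_eq_add_div_add_iff hr₁ hr₂]
end

section
/- Every uniformly dense graph G is (ρ(G)/Δ(G))-tough: for every vertex subset U ⊆ V whose removal increases the number of connected components, the number of new components is at most (Δ(G)/ρ(G))·|U|. -/
/-!
Let `B` be the set of edges of `G` that miss `U`. Every component of `G - U` is a component of
`(V, B)`, so the number of new components is at most `c(B) - c(E) = r(E) - r(B)`. Uniform density
gives `|B| ≤ ρ r(B)`, while `|E| = ρ r(E)`, hence `ρ (r(E) - r(B)) ≤ |E| - |B|`; and at most
`Δ |U|` edges meet `U`.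
-/

open Finset

variable {V : Type*} [Fintype V] [DecidableEq V]

/-- Number of connected components of the graph `(V, A)` for an edge set `A`. -/
noncomputable def compCount (A : Finset (Sym2 V)) : ℕ :=
  Nat.card (SimpleGraph.fromEdgeSet (↑A : Set (Sym2 V))).ConnectedComponent

/-- The rank of an edge set `A` in the cycle matroid: `|V| - c(A)`. -/
noncomputable def rkE (A : Finset (Sym2 V)) : ℕ := Fintype.card V - compCount A

/-- A graph is uniformly dense if `ρ(A) = |A|/rank(A) ≤ ρ(E)` for all nonempty `A ⊆ E`. -/
def graphUD (G : SimpleGraph V) [Fintype G.edgeSet] : Prop :=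
  ∀ A ⊆ G.edgeFinset, A.Nonempty →
    (A.card : ℝ) / (rkE A : ℝ) ≤ (G.edgeFinset.card : ℝ) / (rkE G.edgeFinset : ℝ)

/-- Number of connected components after deleting the vertex set `U` from `G`. -/
noncomputable def remComp (G : SimpleGraph V) (U : Finset V) : ℕ :=
  Nat.card (G.induce ((↑U : Set V)ᶜ)).ConnectedComponent

namespace SimpleGraph

lemma card_connectedComponent_le_card {W : Type*} [Finite W] (H : SimpleGraph W) :
    Nat.card H.ConnectedComponent ≤ Nat.card W :=
  Nat.card_le_card_of_surjective _ (ConnectedComponent.ind fun v ↦ ⟨v, rfl⟩)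

lemma card_connectedComponent_lt_card_of_adj {W : Type*} [Finite W] {H : SimpleGraph W}
    {u v : W} (h : H.Adj u v) : Nat.card H.ConnectedComponent < Nat.card W := by
  have := Fintype.ofFinite W
  have := Fintype.ofFinite H.ConnectedComponent
  simp only [Nat.card_eq_fintype_card]
  refine Fintype.card_lt_of_surjective_not_injective _ (ConnectedComponent.ind fun v ↦ ⟨v, rfl⟩) ?_
  exact fun hinj ↦ h.ne (hinj (ConnectedComponent.sound h.reachable))

lemma card_connectedComponent_induce_le {W : Type*} [Finite W] {G H : SimpleGraph W}
    {s : Set W} (hH : ∀ u v, H.Adj u v ↔ G.Adj u v ∧ u ∈ s ∧ v ∈ s) :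
    Nat.card (G.induce s).ConnectedComponent ≤ Nat.card H.ConnectedComponent := by
  classical
  let φ : G.induce s →g H := ⟨Subtype.val, fun h ↦ (hH _ _).2 ⟨h, Subtype.prop _, Subtype.prop _⟩⟩
  -- recovers the `G[s]`-component; constant on `H`-components since no `H`-edge leaves `s`
  let ψ : W → Option (G.induce s).ConnectedComponent := fun v ↦
    if hv : v ∈ s then some ((G.induce s).connectedComponentMk ⟨v, hv⟩) else none
  have hψ : ∀ {u v}, H.Reachable u v → ψ u = ψ v := by
    intro u v huv
    rw [reachable_iff_reflTransGen] at huv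
    induction huv with
    | refl => rfl
    | tail _ hvw ih =>
      obtain ⟨hG, hv, hw⟩ := (hH _ _).1 hvw
      simp only [ψ, dif_pos hv, dif_pos hw] at ih ⊢
      exact ih.trans (congrArg some (ConnectedComponent.sound (induce_adj.2 hG).reachable))
  refine Nat.card_le_card_of_injective (ConnectedComponent.map φ) fun c d hcd ↦ ?_
  induction c using ConnectedComponent.ind with | h a =>
  induction d using ConnectedComponent.ind with | h b =>
  simpa [ψ, φ, a.prop, b.prop] using hψ (ConnectedComponent.eq.1 hcd)

end SimpleGraph

open SimpleGraph

section CycleMatroid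

omit [DecidableEq V]

noncomputable def cycleDensity (A : Finset (Sym2 V)) : ℝ := #A / rkE A

lemma cycleDensity_nonneg (A : Finset (Sym2 V)) : 0 ≤ cycleDensity A := by
  unfold cycleDensity
  positivity

lemma compCount_le_card (A : Finset (Sym2 V)) : compCount A ≤ Fintype.card V :=
  Nat.card_eq_fintype_card (α := V) ▸ card_connectedComponent_le_card _

lemma cast_rkE (A : Finset (Sym2 V)) : (rkE A : ℝ) = Fintype.card V - compCount A := by
  rw [rkE, Nat.cast_sub (compCount_le_card A)]

lemma rkE_pos_of_subset {G : SimpleGraph V} [Fintype G.edgeSet] {A : Finset (Sym2 V)}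
    (hA : A ⊆ G.edgeFinset) (hne : A.Nonempty) : 0 < rkE A := by
  obtain ⟨e, he⟩ := hne
  induction e using Sym2.ind with | h x y =>
  have hadj : (fromEdgeSet (A : Set (Sym2 V))).Adj x y :=
    (fromEdgeSet_adj _).2 ⟨mem_coe.2 he, (G.mem_edgeFinset.1 (hA he)).ne⟩
  refine Nat.sub_pos_of_lt ?_
  rw [← Nat.card_eq_fintype_card]
  exact card_connectedComponent_lt_card_of_adj hadj

variable {G : SimpleGraph V} [Fintype G.edgeSet] {A : Finset (Sym2 V)}

lemma graphUD.card_le_cycleDensity_mul_rkE (hUD : graphUD G) (hA : A ⊆ G.edgeFinset) :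
    (#A : ℝ) ≤ cycleDensity G.edgeFinset * rkE A := by
  rcases A.eq_empty_or_nonempty with rfl | hne
  · simp only [card_empty, Nat.cast_zero]
    exact mul_nonneg (cycleDensity_nonneg _) (Nat.cast_nonneg _)
  · exact (div_le_iff₀ (by exact_mod_cast rkE_pos_of_subset hA hne)).1 (hUD A hA hne)

lemma graphUD.rkE_sub_le (hUD : graphUD G) (hA : A ⊆ G.edgeFinset) :
    (rkE G.edgeFinset : ℝ) - rkE A ≤ (#G.edgeFinset - #A) / cycleDensity G.edgeFinset := by
  rcases G.edgeFinset.eq_empty_or_nonempty with hE | hE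
  -- with no edges the density is `0 / 0 = 0`, and both sides vanish
  · simp [subset_empty.1 (hE ▸ hA), hE]
  have hrk : (0 : ℝ) < rkE G.edgeFinset := by exact_mod_cast rkE_pos_of_subset subset_rfl hE
  have hcard : (0 : ℝ) < #G.edgeFinset := by exact_mod_cast hE.card_pos
  have hρ : 0 < cycleDensity G.edgeFinset := div_pos hcard hrk
  have hE_eq : cycleDensity G.edgeFinset * rkE G.edgeFinset = #G.edgeFinset :=
    div_mul_cancel₀ _ hrk.ne'
  rw [le_div_iff₀ hρ]
  linarith [hUD.card_le_cycleDensity_mul_rkE hA]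

end CycleMatroid

section EdgesAvoiding

variable (G : SimpleGraph V) [Fintype G.edgeSet] [DecidableRel G.Adj] (U : Finset V)

def edgesAvoiding : Finset (Sym2 V) := G.edgeFinset \ U.biUnion fun u ↦ G.incidenceFinset u

lemma edgesAvoiding_subset : edgesAvoiding G U ⊆ G.edgeFinset := sdiff_subset

lemma fromEdgeSet_edgesAvoiding_adj {u v : V} :
    (fromEdgeSet (edgesAvoiding G U : Set (Sym2 V))).Adj u v ↔ G.Adj u v ∧ u ∉ U ∧ v ∉ U := by
  simp only [edgesAvoiding, coe_sdiff, coe_edgeFinset, coe_biUnion, coe_incidenceFinset,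
    fromEdgeSet_sdiff, fromEdgeSet_edgeSet, sdiff_adj, fromEdgeSet_adj, Set.mem_iUnion,
    mem_coe, mk'_mem_incidenceSet_iff]
  grind [SimpleGraph.irrefl]

lemma remComp_le_compCount_edgesAvoiding : remComp G U ≤ compCount (edgesAvoiding G U) :=
  card_connectedComponent_induce_le fun _ _ ↦ fromEdgeSet_edgesAvoiding_adj G U

lemma card_edgeFinset_le_card_edgesAvoiding_add :
    #G.edgeFinset ≤ #(edgesAvoiding G U) + G.maxDegree * #U :=
  calc #G.edgeFinset
      ≤ #(edgesAvoiding G U) + #(U.biUnion fun u ↦ G.incidenceFinset u) := by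
        have := le_card_sdiff (U.biUnion fun u ↦ G.incidenceFinset u) G.edgeFinset
        rw [edgesAvoiding]
        omega
    _ ≤ #(edgesAvoiding G U) + ∑ u ∈ U, G.degree u := by
        gcongr
        simpa only [card_incidenceFinset_eq_degree] using
          card_biUnion_le (s := U) (t := fun u ↦ G.incidenceFinset u)
    _ ≤ #(edgesAvoiding G U) + G.maxDegree * #U := by
        gcongr
        simpa [mul_comm] using sum_le_card_nsmul U _ _ fun u _ ↦ G.degree_le_maxDegree u

end EdgesAvoiding

/-- A uniformly dense graph is `(ρ(G)/Δ(G))`-tough: if removing `U` increases the number of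
components, the number of new components is at most `(Δ(G)/ρ(G))·|U|`. -/
theorem uniformlyDense_tough (G : SimpleGraph V) [Fintype G.edgeSet] [DecidableRel G.Adj]
    (hUD : graphUD G) :
    ∀ U : Finset V, compCount G.edgeFinset < remComp G U →
      (remComp G U : ℝ) - (compCount G.edgeFinset : ℝ) ≤
        ((G.maxDegree : ℝ) / ((G.edgeFinset.card : ℝ) / (rkE G.edgeFinset : ℝ))) *
          (U.card : ℝ) := by
  intro U _
  set E := G.edgeFinset
  set B := edgesAvoiding G U
  have hcomp : (remComp G U : ℝ) ≤ compCount B := by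
    exact_mod_cast remComp_le_compCount_edgesAvoiding G U
  have hcard : (#E : ℝ) ≤ #B + G.maxDegree * #U := by
    exact_mod_cast card_edgeFinset_le_card_edgesAvoiding_add G U
  calc (remComp G U : ℝ) - compCount E
      ≤ rkE E - rkE B := by rw [cast_rkE, cast_rkE]; linarith
    _ ≤ (#E - #B) / cycleDensity E := hUD.rkE_sub_le (edgesAvoiding_subset G U)
    _ ≤ G.maxDegree * #U / cycleDensity E :=
        div_le_div_of_nonneg_right (by linarith) (cycleDensity_nonneg E)
    _ = G.maxDegree / cycleDensity E * #U := by ring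
end
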